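/- arXiv:2204.05033 — 2 statements merged into one kernel-verified Lean document; each statement's English description precedes it below -/
import Mathlib

section
/- Let x_1^{kℓ} ∈ A^{kℓ} have type Q with Q(a_i) > β ≥ 1/(2ℓ) for all letters a_i of a_1^k, and let V_1^{kℓ} be a uniformly random permutation of x_1^{kℓ}. Then P(V_1^k = a_1^k) > Q^k(a_1^k)·(1 − k/(ℓβ)). -/
/-! Put `n = kℓ` and let `c(b)` be the number of occurrences of `b` in `x`. Peel off the first
position of a permutation (`Perm.decomposeFin`): it can receive any of the `c(a₀)` copies of `a₀`,
and removing that copy lowers every letter count by at most one; hence at least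
`(n - k)! ∏ᵢ (c(aᵢ) - i)` permutations put `a` in front. As `n! ≤ nᵏ (n - k)!`, the probability
is at least `∏ᵢ Q(aᵢ) (1 - i / c(aᵢ))`. Since `c(aᵢ) > nβ`, each factor is at least
`Q(aᵢ) (1 - t)` with `t = (k - 1)/(nβ)`, and Bernoulli's inequality gives
`(1 - t)ᵏ ≥ 1 - kt = 1 - (k - 1)/(ℓβ) > 1 - k/(ℓβ)`. This needs `t ≤ 1`, which holds when
`k ≤ ℓβ`; when `ℓβ < k` the left-hand side is negative. -/

open scoped Classical BigOperators

/-- The empirical PMF (type) of a string `x ∈ A^n`. -/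
noncomputable def empPMF {A : Type*} [Fintype A] (n : ℕ) (x : Fin n → A) (a : A) : ℝ :=
  ((Finset.univ.filter (fun i : Fin n => x i = a)).card : ℝ) / n

open Finset Equiv Nat

theorem prod_mul_one_sub_card_mul_le_prod {ι : Type*} (s : Finset ι) {q r : ι → ℝ} {t : ℝ}
    (ht : t ≤ 1) (hq : ∀ i ∈ s, 0 ≤ q i) (hqr : ∀ i ∈ s, q i * (1 - t) ≤ r i) :
    (∏ i ∈ s, q i) * (1 - #s * t) ≤ ∏ i ∈ s, r i :=
  calc (∏ i ∈ s, q i) * (1 - #s * t)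
      ≤ (∏ i ∈ s, q i) * (1 - t) ^ #s := by
        gcongr
        · exact prod_nonneg hq
        · simpa [sub_eq_add_neg] using one_add_mul_le_pow (a := -t) (by linarith) #s
    _ = ∏ i ∈ s, q i * (1 - t) := by rw [prod_mul_distrib, prod_const]
    _ ≤ ∏ i ∈ s, r i :=
        prod_le_prod (fun i hi => mul_nonneg (hq i hi) (by linarith)) hqr

section Counting

variable {A : Type*}

noncomputable def letterCount {n : ℕ} (x : Fin n → A) (b : A) : ℕ := #{j | x j = b}

/-- The event `V₁ᵏ = a` for the rearrangement `V = x ∘ σ`. -/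
noncomputable def firstBlockPerms {k n : ℕ} (hkn : k ≤ n) (x : Fin n → A) (a : Fin k → A) :
    Finset (Perm (Fin n)) :=
  {σ | ∀ i, x (σ (Fin.castLE hkn i)) = a i}

theorem letterCount_comp_perm {n : ℕ} (x : Fin n → A) (τ : Perm (Fin n)) (b : A) :
    letterCount (x ∘ τ) b = letterCount x b :=
  card_equiv τ (by simp)

theorem letterCount_le_letterCount_comp_succ_add_one {n : ℕ} (x : Fin (n + 1) → A) (b : A) :
    letterCount x b ≤ letterCount (x ∘ Fin.succ) b + 1 := by
  rw [letterCount, Fin.card_filter_univ_succ']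
  split_ifs <;> simp [letterCount, add_comm]

theorem mem_firstBlockPerms_decomposeFin_symm {k m : ℕ} (hkm : k + 1 ≤ m + 1)
    (x : Fin (m + 1) → A) (a : Fin (k + 1) → A) (p : Fin (m + 1)) (e : Perm (Fin m)) :
    Perm.decomposeFin.symm (p, e) ∈ firstBlockPerms hkm x a ↔
      x p = a 0 ∧ e ∈ firstBlockPerms (by omega) (x ∘ swap 0 p ∘ Fin.succ) (Fin.tail a) := by
  simp only [firstBlockPerms, mem_filter, mem_univ, true_and]
  simp [Fin.forall_fin_succ, Perm.decomposeFin_symm_apply_succ, Fin.tail]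

theorem card_firstBlockPerms_eq_sum {k m : ℕ} (hkm : k + 1 ≤ m + 1)
    (x : Fin (m + 1) → A) (a : Fin (k + 1) → A) :
    #(firstBlockPerms hkm x a) = ∑ p ∈ {p | x p = a 0},
      #(firstBlockPerms (by omega) (x ∘ swap 0 p ∘ Fin.succ) (Fin.tail a)) := by
  rw [card_equiv Perm.decomposeFin
    (t := {pe | Perm.decomposeFin.symm pe ∈ firstBlockPerms hkm x a}) (by simp),
    card_filter, Fintype.sum_prod_type, sum_filter]
  refine sum_congr rfl fun p _ => ?_
  simp only [mem_firstBlockPerms_decomposeFin_symm]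
  split_ifs with h <;> simp [h]

theorem factorial_mul_prod_le_card_firstBlockPerms :
    ∀ {k n : ℕ} (hkn : k ≤ n) (x : Fin n → A) (a : Fin k → A),
      (n - k)! * ∏ i : Fin k, (letterCount x (a i) - i) ≤ #(firstBlockPerms hkn x a)
  | 0, n, _, x, a => by simp [firstBlockPerms, Fintype.card_perm]
  | k + 1, 0, hkn, _, _ => by omega
  | k + 1, m + 1, hkn, x, a => by
    have fiber (p : Fin (m + 1)) :
        (m - k)! * ∏ i : Fin k, (letterCount x (a i.succ) - (i + 1)) ≤
          #(firstBlockPerms (by omega) (x ∘ swap 0 p ∘ Fin.succ) (Fin.tail a)) := by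
      refine le_trans ?_ (factorial_mul_prod_le_card_firstBlockPerms _ _ _)
      gcongr _ * ∏ i, ?_ with i
      have := letterCount_le_letterCount_comp_succ_add_one (x ∘ swap 0 p) (a i.succ)
      rw [letterCount_comp_perm] at this
      simp only [Fin.tail, ← Function.comp_assoc]
      omega
    rw [card_firstBlockPerms_eq_sum, Fin.prod_univ_succ]
    calc (m + 1 - (k + 1))! * ((letterCount x (a 0) - (0 : Fin (k + 1))) *
          ∏ i : Fin k, (letterCount x (a i.succ) - i.succ))
        = #{p | x p = a 0} • ((m - k)! * ∏ i : Fin k, (letterCount x (a i.succ) - (i + 1))) := by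
          simp only [smul_eq_mul, Fin.val_zero, Fin.val_succ, Nat.sub_zero, letterCount]
          rw [Nat.add_sub_add_right]; ring
      _ ≤ _ := card_nsmul_le_sum _ _ _ fun p _ => fiber p

theorem prod_div_le_card_firstBlockPerms_div {k n : ℕ} (hkn : k ≤ n) (x : Fin n → A)
    (a : Fin k → A) :
    ∏ i : Fin k, ((letterCount x (a i) - i : ℕ) : ℝ) / n ≤
      #(firstBlockPerms hkn x a) / (n ! : ℝ) := by
  have hcount : n ! * ∏ i : Fin k, (letterCount x (a i) - i) ≤
      n ^ k * #(firstBlockPerms hkn x a) :=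
    calc n ! * ∏ i : Fin k, (letterCount x (a i) - i)
        = n.descFactorial k * ((n - k)! * ∏ i : Fin k, (letterCount x (a i) - i)) := by
          rw [← factorial_mul_descFactorial hkn]; ring
      _ ≤ n ^ k * #(firstBlockPerms hkn x a) := by
          gcongr
          · exact descFactorial_le_pow n k
          · exact factorial_mul_prod_le_card_firstBlockPerms hkn x a
  have hpow : (0 : ℝ) < n ^ k := by
    rcases k.eq_zero_or_pos with rfl | hk
    · simp
    · exact pow_pos (by exact_mod_cast hk.trans_le hkn) k
  rw [prod_div_distrib, prod_const, Finset.card_fin,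
    div_le_div_iff₀ hpow (by positivity)]
  exact_mod_cast (mul_comm _ _).trans_le (hcount.trans_eq (mul_comm _ _))

end Counting

theorem empPMF_mul_one_sub_le {A : Type*} [Fintype A] {n : ℕ} (hn : 0 < n) (x : Fin n → A)
    (b : A) {β t : ℝ} {i : ℕ} (hβ : β < empPMF n x b) (ht0 : 0 ≤ t) (ht1 : t ≤ 1)
    (hi : (i : ℝ) ≤ n * β * t) :
    empPMF n x b * (1 - t) ≤ ((letterCount x b - i : ℕ) : ℝ) / n := by
  set c := letterCount x b
  have hQ : empPMF n x b = c / n := rfl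
  have hc : n * β < c := by
    rw [hQ, lt_div_iff₀ (by positivity)] at hβ
    linarith
  have hic : (i : ℝ) ≤ c * t := hi.trans (by gcongr)
  have hi_le_c : i ≤ c := by exact_mod_cast hic.trans (mul_le_of_le_one_right c.cast_nonneg ht1)
  rw [hQ, div_mul_eq_mul_div, Nat.cast_sub hi_le_c]
  gcongr
  linarith

theorem prod_empPMF_mul_one_sub_le_card_firstBlockPerms_div {A : Type*} [Fintype A] {k n : ℕ}
    (hkn : k ≤ n) (hn : 0 < n) (x : Fin n → A) (a : Fin k → A) {β t : ℝ}
    (hβ : ∀ i, β < empPMF n x (a i)) (ht0 : 0 ≤ t) (ht1 : t ≤ 1) (hkt : (k : ℝ) - 1 ≤ n * β * t) :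
    (∏ i, empPMF n x (a i)) * (1 - k * t) ≤ #(firstBlockPerms hkn x a) / (n ! : ℝ) := by
  have hi (i : Fin k) : (i : ℝ) ≤ n * β * t := by
    have : (i : ℝ) + 1 ≤ k := by exact_mod_cast i.isLt
    linarith
  calc (∏ i, empPMF n x (a i)) * (1 - k * t)
      ≤ ∏ i : Fin k, ((letterCount x (a i) - i : ℕ) : ℝ) / n := by
        simpa only [Finset.card_fin] using
          prod_mul_one_sub_card_mul_le_prod univ (q := fun i => empPMF n x (a i)) ht1
          (fun i _ => div_nonneg (Nat.cast_nonneg _) n.cast_nonneg)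
          fun i _ => empPMF_mul_one_sub_le hn x (a i) (hβ i) ht0 ht1 (hi i)
    _ ≤ _ := prod_div_le_card_firstBlockPerms_div hkn x a

theorem random_perm_first_block_prob_lower_general {A : Type*} [Fintype A]
    (k ℓ : ℕ) (hk : 1 ≤ k) (hkl : k ≤ k * ℓ)
    (x : Fin (k * ℓ) → A) (a : Fin k → A)
    (β : ℝ) (hβ : (1 : ℝ) / (2 * ℓ) ≤ β)
    (hQβ : ∀ i : Fin k, β < empPMF (k * ℓ) x (a i)) :
    (∏ i, empPMF (k * ℓ) x (a i)) * (1 - (k : ℝ) / (ℓ * β))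
      < ((Finset.univ.filter (fun σ : Equiv.Perm (Fin (k * ℓ)) =>
          ∀ i : Fin k, x (σ (Fin.castLE hkl i)) = a i)).card : ℝ)
          / (Nat.factorial (k * ℓ)) := by
  have hℓ : 0 < ℓ := Nat.pos_of_ne_zero (by rintro rfl; omega)
  have hβ0 : 0 < β := lt_of_lt_of_le (by positivity) hβ
  have hQ : 0 < ∏ i, empPMF (k * ℓ) x (a i) := prod_pos fun i _ => hβ0.trans (hQβ i)
  rcases lt_or_ge ((ℓ : ℝ) * β) k with hsmall | hlarge
  · have hneg : 1 - (k : ℝ) / (ℓ * β) < 0 := by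
      rw [sub_neg, one_lt_div (by positivity)]; exact hsmall
    exact (mul_neg_of_pos_of_neg hQ hneg).trans_le (by positivity)
  have hk' : (1 : ℝ) ≤ k := by exact_mod_cast hk
  set t : ℝ := (k - 1) / (k * ℓ * β) with ht
  have ht0 : 0 ≤ t := div_nonneg (by linarith) (by positivity)
  have ht1 : t ≤ 1 := by
    rw [ht, div_le_one (by positivity)]
    nlinarith [mul_le_mul_of_nonneg_left hlarge (by positivity : (0 : ℝ) ≤ k)]
  have hkt : (k : ℝ) - 1 ≤ (k * ℓ : ℕ) * β * t :=
    le_of_eq (by push_cast; rw [ht]; field_simp)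
  calc (∏ i, empPMF (k * ℓ) x (a i)) * (1 - (k : ℝ) / (ℓ * β))
      < (∏ i, empPMF (k * ℓ) x (a i)) * (1 - k * t) := by
        gcongr
        rw [ht, mul_div_assoc', mul_assoc, mul_div_mul_left _ _ (by positivity)]
        gcongr
        linarith
    _ ≤ _ := prod_empPMF_mul_one_sub_le_card_firstBlockPerms_div hkl (Nat.mul_pos (by omega) hℓ)
        x a hQβ ht0 ht1 hkt

/-- if `x_1^{kℓ}` has type `Q` with `Q(a_i) > β ≥ 1/(2ℓ)` for all
letters `a_i` of `a_1^k`, and `V_1^{kℓ}` is a uniformly random permutation of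
`x_1^{kℓ}`, then `P(V_1^k = a_1^k) > Q^k(a_1^k)·(1 − k/(ℓβ))`. -/
theorem random_perm_first_block_prob_lower {A : Type*} [Fintype A]
    (k ℓ : ℕ) (hk : 1 ≤ k) (hl : 1 ≤ ℓ) (hkl : k ≤ k * ℓ)
    (x : Fin (k * ℓ) → A) (a : Fin k → A)
    (β : ℝ) (hβ : (1 : ℝ) / (2 * ℓ) ≤ β)
    (hQβ : ∀ i : Fin k, β < empPMF (k * ℓ) x (a i)) :
    (∏ i, empPMF (k * ℓ) x (a i)) * (1 - (k : ℝ) / (ℓ * β))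
      < ((Finset.univ.filter (fun σ : Equiv.Perm (Fin (k * ℓ)) =>
          ∀ i : Fin k, x (σ (Fin.castLE hkl i)) = a i)).card : ℝ)
          / (Nat.factorial (k * ℓ)) :=
  random_perm_first_block_prob_lower_general k ℓ hk hkl x a β hβ hQβ
end

section
/- Pythagorean inequality for relative entropy: if E is a closed convex set of PMFs on a finite set, Q a PMF with D* = min_{W∈E} D(W‖Q) attained at W*, then for every P ∈ E, D(P‖Q) ≥ D(P‖W*) + D(W*‖Q). -/
open scoped Classical BigOperators

/-- Relative entropy as an extended real, `+∞` when absolute continuity fails. -/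
noncomputable def relEntE {A : Type*} [Fintype A] (P Q : A → ℝ) : EReal :=
  if ∀ a, Q a = 0 → P a = 0 then ((∑ a, P a * Real.log (P a / Q a) : ℝ) : EReal) else ⊤

/-!
For `0 < t < 1` the mixture `Wₜ = (1 - t) W* + t P` lies in `E`, and the compensation identity
`D(Wₜ‖Q) + (1 - t) D(W*‖Wₜ) + t D(P‖Wₜ) = (1 - t) D(W*‖Q) + t D(P‖Q)`, minimality of `W*` and
Gibbs' inequality `D(W*‖Wₜ) ≥ 0` give `D(W*‖Q) + D(P‖Wₜ) ≤ D(P‖Q)`. As `t → 0`, `D(P‖Wₜ)` blows up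
like `-P a · log t` at any `a` with `W* a = 0 < P a`, so `P ≪ W*`, and then `D(P‖Wₜ) → D(P‖W*)`.
-/

open Real Finset Filter Topology

noncomputable def relEnt {A : Type*} [Fintype A] (P Q : A → ℝ) : ℝ :=
  ∑ a, P a * log (P a / Q a)

lemma mul_log_div_eq_sub {x y : ℝ} (h : y = 0 → x = 0) :
    x * log (x / y) = x * log x - x * log y := by
  rcases eq_or_ne x 0 with rfl | hx
  · simp
  · rw [log_div hx (mt h hx)]
    ring

lemma sub_le_mul_log_div {p w : ℝ} (hp : 0 ≤ p) (hw : 0 ≤ w) (h : w = 0 → p = 0) :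
    p - w ≤ p * log (p / w) := by
  rcases hp.eq_or_lt with rfl | hp
  · simpa using hw
  have hw : 0 < w := hw.lt_of_ne (Ne.symm (mt h hp.ne'))
  have := mul_le_mul_of_nonneg_left (one_sub_inv_le_log_of_pos (div_pos hp hw)) hp.le
  rwa [inv_div, mul_sub, mul_one, mul_div_cancel₀ _ hp.ne'] at this

section Mixture

variable {A : Type*} {P W : A → ℝ} {t : ℝ}

lemma mixture_apply (a : A) : ((1 - t) • W + t • P) a = (1 - t) * W a + t * P a := rfl

lemma mixture_absCont {Q : A → ℝ} (hPQ : ∀ a, Q a = 0 → P a = 0)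
    (hWQ : ∀ a, Q a = 0 → W a = 0) (a : A) (hQ : Q a = 0) : ((1 - t) • W + t • P) a = 0 := by
  simp [hWQ a hQ, hPQ a hQ]

variable (hP : ∀ a, 0 ≤ P a) (hW : ∀ a, 0 ≤ W a) (ht : t ∈ Set.Ioo 0 1)
include hP hW ht

lemma mixture_nonneg (a : A) : 0 ≤ ((1 - t) • W + t • P) a :=
  add_nonneg (mul_nonneg (sub_pos.2 ht.2).le (hW a)) (mul_nonneg ht.1.le (hP a))

lemma mixture_eq_zero_iff (a : A) :
    ((1 - t) • W + t • P) a = 0 ↔ W a = 0 ∧ P a = 0 := by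
  rw [mixture_apply, add_eq_zero_iff_of_nonneg (mul_nonneg (sub_pos.2 ht.2).le (hW a))
    (mul_nonneg ht.1.le (hP a)), mul_eq_zero, mul_eq_zero]
  simp [(sub_pos.2 ht.2).ne', ht.1.ne']

end Mixture

section

variable {A : Type*} [Fintype A]

lemma relEntE_of_absCont {P Q : A → ℝ} (h : ∀ a, Q a = 0 → P a = 0) :
    relEntE P Q = relEnt P Q :=
  if_pos h

lemma relEntE_of_not_absCont {P Q : A → ℝ} (h : ¬∀ a, Q a = 0 → P a = 0) :
    relEntE P Q = ⊤ :=
  if_neg h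

section Gibbs

variable {P W : A → ℝ} (hP : ∀ a, 0 ≤ P a) (hW : ∀ a, 0 ≤ W a) (hPW : ∀ a, W a = 0 → P a = 0)
include hP hW hPW

lemma mul_log_div_sub_le_relEnt (a : A) :
    P a * log (P a / W a) - (P a - W a) ≤ relEnt P W - (∑ b, P b - ∑ b, W b) := by
  rw [relEnt, ← sum_sub_distrib, ← sum_sub_distrib]
  exact single_le_sum (f := fun b => P b * log (P b / W b) - (P b - W b))
    (fun b _ => sub_nonneg.2 (sub_le_mul_log_div (hP b) (hW b) (hPW b))) (mem_univ a)

lemma relEnt_nonneg (hsum : ∑ a, P a = ∑ a, W a) : 0 ≤ relEnt P W := by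
  rw [relEnt]
  refine le_trans ?_ (sum_le_sum fun a _ => sub_le_mul_log_div (hP a) (hW a) (hPW a))
  rw [sum_sub_distrib, hsum, sub_self]

end Gibbs

section Compensation

variable {P W Q : A → ℝ} {t : ℝ}

lemma sum_mixture (hsum : ∑ a, P a = ∑ a, W a) : ∑ a, ((1 - t) • W + t • P) a = ∑ a, W a := by
  simp only [mixture_apply, sum_add_distrib, ← mul_sum, hsum]
  ring

variable (hP : ∀ a, 0 ≤ P a) (hW : ∀ a, 0 ≤ W a) (ht : t ∈ Set.Ioo 0 1)
  (hPQ : ∀ a, Q a = 0 → P a = 0) (hWQ : ∀ a, Q a = 0 → W a = 0)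
include hP hW ht hPQ hWQ

lemma relEnt_mixture_add_eq :
    relEnt ((1 - t) • W + t • P) Q
        + ((1 - t) * relEnt W ((1 - t) • W + t • P) + t * relEnt P ((1 - t) • W + t • P))
      = (1 - t) * relEnt W Q + t * relEnt P Q := by
  simp only [relEnt, mul_sum, ← sum_add_distrib]
  refine sum_congr rfl fun a _ => ?_
  have hm0 := mixture_eq_zero_iff hP hW ht a
  rw [mul_log_div_eq_sub (mixture_absCont hPQ hWQ a),
    mul_log_div_eq_sub fun h => (hm0.1 h).1, mul_log_div_eq_sub fun h => (hm0.1 h).2,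
    mul_log_div_eq_sub (hWQ a), mul_log_div_eq_sub (hPQ a)]
  simp only [mixture_apply]
  ring

lemma relEnt_add_relEnt_mixture_le (hsum : ∑ a, P a = ∑ a, W a)
    (hmin : relEnt W Q ≤ relEnt ((1 - t) • W + t • P) Q) :
    relEnt W Q + relEnt P ((1 - t) • W + t • P) ≤ relEnt P Q := by
  have hid := relEnt_mixture_add_eq hP hW ht hPQ hWQ
  have hgibbs : 0 ≤ relEnt W ((1 - t) • W + t • P) :=
    relEnt_nonneg hW (mixture_nonneg hP hW ht)
      (fun a h => ((mixture_eq_zero_iff hP hW ht a).1 h).1) (sum_mixture hsum).symm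
  have hscaled : t * (relEnt W Q + relEnt P ((1 - t) • W + t • P)) ≤ t * relEnt P Q := by
    nlinarith [mul_nonneg (sub_pos.2 ht.2).le hgibbs]
  exact le_of_mul_le_mul_left hscaled ht.1

end Compensation

section Limit

variable {P W : A → ℝ}

lemma continuousAt_relEnt_mixture (hPW : ∀ a, W a = 0 → P a = 0) :
    ContinuousAt (fun t : ℝ => relEnt P ((1 - t) • W + t • P)) 0 := by
  simp only [relEnt, mixture_apply]
  refine tendsto_finsetSum _ fun a _ => ?_
  by_cases hPa : P a = 0
  · simp only [hPa, zero_mul]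
    exact tendsto_const_nhds
  · have hWa : W a ≠ 0 := mt (hPW a) hPa
    show ContinuousAt (fun t : ℝ => P a * log (P a / ((1 - t) * W a + t * P a))) 0
    fun_prop (disch := simp [*])

variable {c : ℝ}
  (hbound : ∀ t ∈ Set.Ioo (0 : ℝ) 1, relEnt P ((1 - t) • W + t • P) ≤ c)
include hbound

lemma absCont_of_relEnt_mixture_le (hP : ∀ a, 0 ≤ P a) (hW : ∀ a, 0 ≤ W a)
    (hsum : ∑ a, P a = ∑ a, W a) : ∀ a, W a = 0 → P a = 0 := by
  by_contra! ⟨a, hWa, hPa⟩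
  have hPa : 0 < P a := (hP a).lt_of_ne' hPa
  have hblowup : Tendsto (fun t => P a * -log t + -P a) (𝓝[>] 0) atTop :=
    tendsto_atTop_add_const_right _ _
      ((tendsto_neg_atBot_atTop.comp tendsto_log_nhdsGT_zero).const_mul_atTop hPa)
  obtain ⟨t, hct, ht⟩ :=
    ((hblowup.eventually_gt_atTop c).and (Ioo_mem_nhdsGT one_pos)).exists
  have hlower := mul_log_div_sub_le_relEnt hP (mixture_nonneg hP hW ht)
    (fun b h => ((mixture_eq_zero_iff hP hW ht b).1 h).2) a
  rw [sum_mixture hsum, ← hsum, sub_self, sub_zero, mixture_apply, hWa, mul_zero, zero_add,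
    div_mul_cancel_right₀ hPa.ne', log_inv] at hlower
  nlinarith [hbound t ht, ht.1, ht.2]

lemma relEnt_le_of_relEnt_mixture_le (hPW : ∀ a, W a = 0 → P a = 0) : relEnt P W ≤ c := by
  have hlim := (continuousAt_relEnt_mixture hPW).tendsto.mono_left
    (nhdsWithin_le_nhds (s := Set.Ioi 0))
  simp only [sub_zero, one_smul, zero_smul, add_zero] at hlim
  exact le_of_tendsto hlim (eventually_of_mem (Ioo_mem_nhdsGT one_pos) hbound)

end Limit

end

theorem pythagorean_inequality_relEnt_general {A : Type*} [Fintype A]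
    (E : Set (A → ℝ)) (hEpmf : ∀ P ∈ E, (∀ a, 0 ≤ P a) ∧ (∑ a, P a) = 1)
    (hEconvex : Convex ℝ E)
    (Q : A → ℝ)
    (Wstar : A → ℝ) (hWE : Wstar ∈ E)
    (hWmin : ∀ P ∈ E, relEntE Wstar Q ≤ relEntE P Q) :
    ∀ P ∈ E, relEntE P Wstar + relEntE Wstar Q ≤ relEntE P Q := by
  intro P hPE
  by_cases hPQ : ∀ a, Q a = 0 → P a = 0
  swap
  · simp [relEntE_of_not_absCont hPQ]
  by_cases hWQ : ∀ a, Q a = 0 → Wstar a = 0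
  swap
  · have hPQ_top := hWmin P hPE
    rw [relEntE_of_not_absCont hWQ, top_le_iff] at hPQ_top
    simp [hPQ_top]
  obtain ⟨hP0, hP1⟩ := hEpmf P hPE
  obtain ⟨hW0, hW1⟩ := hEpmf Wstar hWE
  have hsum : ∑ a, P a = ∑ a, Wstar a := hP1.trans hW1.symm
  have hbound : ∀ t ∈ Set.Ioo (0 : ℝ) 1,
      relEnt P ((1 - t) • Wstar + t • P) ≤ relEnt P Q - relEnt Wstar Q := by
    intro t ht
    have hmin := hWmin _ (hEconvex hWE hPE (sub_pos.2 ht.2).le ht.1.le (sub_add_cancel 1 t))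
    rw [relEntE_of_absCont hWQ, relEntE_of_absCont (mixture_absCont hPQ hWQ),
      EReal.coe_le_coe_iff] at hmin
    linarith [relEnt_add_relEnt_mixture_le hP0 hW0 ht hPQ hWQ hsum hmin]
  have hPW := absCont_of_relEnt_mixture_le hbound hP0 hW0 hsum
  rw [relEntE_of_absCont hPW, relEntE_of_absCont hWQ, relEntE_of_absCont hPQ, ← EReal.coe_add,
    EReal.coe_le_coe_iff]
  linarith [relEnt_le_of_relEnt_mixture_le hbound hPW]

/-- Pythagorean inequality for relative entropy. If `E` is a closed
convex set of PMFs on a finite set, `Q` a PMF, and `W*` the I-projection of `Q`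
onto `E` (i.e. the minimizer of `D(·‖Q)` over `E`), then for every `P ∈ E`,
`D(P‖Q) ≥ D(P‖W*) + D(W*‖Q)`. -/
theorem pythagorean_inequality_relEnt {A : Type*} [Fintype A]
    (E : Set (A → ℝ)) (hEpmf : ∀ P ∈ E, (∀ a, 0 ≤ P a) ∧ (∑ a, P a) = 1)
    (hEclosed : IsClosed E) (hEconvex : Convex ℝ E)
    (Q : A → ℝ) (hQ0 : ∀ a, 0 ≤ Q a) (hQ1 : (∑ a, Q a) = 1)
    (Wstar : A → ℝ) (hWE : Wstar ∈ E)
    (hWmin : ∀ P ∈ E, relEntE Wstar Q ≤ relEntE P Q) :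
    ∀ P ∈ E, relEntE P Wstar + relEntE Wstar Q ≤ relEntE P Q :=
  pythagorean_inequality_relEnt_general E hEpmf hEconvex Q Wstar hWE hWmin
end
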